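/- arXiv:1203.5447 — 4 statements merged into one kernel-verified Lean document; each statement's English description precedes it below -/
import Mathlib

section
/- Let f be a polynomial map ℂ → ℂ of degree n ≥ 2 whose derivative f′ vanishes at exactly one point of ℂ. Let z and z′ be periodic points of f of periods h ≥ 1 and h′ ≥ 1 respectively, with multipliers μ = ∏_{j=0}^{h-1} f′(f^{∘j}(z)) and μ′ = ∏_{j=0}^{h′-1} f′(f^{∘j}(z′)). Then the integral closure of ℤ[μ] in ℂ equals the integral closure of ℤ[μ′] in ℂ. -/
/-!
After an affine change of coordinates a polynomial with a single critical point is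
`g(y) = y ^ N + a` with `N ≥ 2`, and the multiplier of a periodic orbit is
`∏ N y_j ^ (N - 1)`. The integral closure of `ℤ[μ]` is the intersection of the valuation
subrings of `ℂ` containing `μ`, so it suffices to show that every valuation subring contains
`μ` exactly when it contains `w = N ^ N a ^ (N - 1)`, which does not depend on the orbit.
For a valuation `v`, take the point of the orbit where `v` is largest. If `v w ≤ 1`, this
maximum `M` satisfies `M ≤ 1` or `M ^ N ≤ v a`, and either bounds every factor of `μ` by `1`.
If `v w > 1`, then `v a > 1`, and the orbit can neither escape (it is periodic) nor drop below
the maximum (the next point would have value `v a`, larger still); so `v y_j ^ N = v a` along the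
whole orbit, and each factor has `N`-th power `v w > 1`.
-/

/-- The integral closure of `ℤ[u]` in `ℂ`: the set of complex numbers satisfying a
monic polynomial equation with coefficients in the subring `ℤ[u]` of `ℂ`. -/
noncomputable def intClosure (u : ℂ) : Set ℂ :=
  {x : ℂ | IsIntegral ↥(Algebra.adjoin ℤ ({u} : Set ℂ)) x}

open Function Polynomial Finset

theorem Function.IsPeriodicPt.exists_forall_apply_iterate_le {α β : Type*} [LinearOrder β]
    {f : α → α} {x : α} {h : ℕ} (hx : IsPeriodicPt f h x) (hh : 0 < h) (F : α → β) :
    ∃ j₀, ∀ j, F (f^[j] x) ≤ F (f^[j₀] x) := by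
  obtain ⟨j₀, -, hmax⟩ :=
    (range h).exists_max_image (fun j ↦ F (f^[j] x)) ⟨0, mem_range.2 hh⟩
  exact ⟨j₀, fun j ↦ hx.iterate_mod_apply j ▸ hmax _ (mem_range.2 (j.mod_lt hh))⟩

def unicritical {K : Type*} [CommRing K] (n : ℕ) (a y : K) : K := y ^ n + a

namespace Valuation

variable {K Γ₀ : Type*} [CommRing K] [LinearOrderedCommGroupWithZero Γ₀] (v : Valuation K Γ₀)
  {n h : ℕ} {a x y : K}

theorem le_one_or_pow_le_of_map_unicritical_le (hn : 2 ≤ n)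
    (hy : v (unicritical n a y) ≤ v y) : v y ≤ 1 ∨ v y ^ n ≤ v a := by
  by_contra! ⟨hy1, hya⟩
  rw [unicritical, v.map_add_eq_of_lt_left (by rwa [map_pow]), map_pow] at hy
  exact hy.not_gt (lt_self_pow₀ hy1 hn)

theorem le_max_of_map_unicritical_le (hy : v (unicritical n a y) ≤ v y) :
    v a ≤ max (v y) (v y ^ n) :=
  calc v a = v (unicritical n a y - y ^ n) := by rw [unicritical, add_sub_cancel_left]
    _ ≤ max (v (unicritical n a y)) (v (y ^ n)) := v.map_sub _ _
    _ ≤ max (v y) (v y ^ n) := by rw [map_pow]; exact max_le_max_right _ hy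

theorem map_iterate_unicritical_eq (hn : 2 ≤ n) (ha : 1 < v a) {j₀ : ℕ}
    (hmax : ∀ j, v ((unicritical n a)^[j] x) ≤ v ((unicritical n a)^[j₀] x)) :
    v ((unicritical n a)^[j₀] x) ^ n = v a ∧
      ∀ j, v ((unicritical n a)^[j] x) = v ((unicritical n a)^[j₀] x) := by
  set g := unicritical n a
  set M := v (g^[j₀] x)
  have hy : v (g (g^[j₀] x)) ≤ M := by simpa only [iterate_succ_apply'] using hmax (j₀ + 1)
  have hM : 1 < M := by
    by_contra! hM
    exact (v.le_max_of_map_unicritical_le hy).not_gt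
      (lt_of_le_of_lt (max_le hM (pow_le_one' hM n)) ha)
  have hMn : M < M ^ n := lt_self_pow₀ hM hn
  have hMa : M ^ n = v a := le_antisymm
    ((v.le_one_or_pow_le_of_map_unicritical_le hn hy).resolve_left hM.not_ge)
    ((v.le_max_of_map_unicritical_le hy).trans (max_le hMn.le le_rfl))
  refine ⟨hMa, fun j ↦ (hmax j).eq_or_lt.resolve_right fun hj ↦ ?_⟩
  have hjn : v ((g^[j] x) ^ n) < v a := by
    rw [map_pow, ← hMa]; exact pow_lt_pow_left₀ hj zero_le (by omega)
  have hnext : v (g^[j + 1] x) = v a := by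
    rw [iterate_succ_apply']; exact v.map_add_eq_of_lt_right hjn
  exact (hmax (j + 1)).not_gt (hnext ▸ hMa ▸ hMn)

theorem map_multiplier_unicritical_le_one_iff (hn : 2 ≤ n) (hN : v n ≤ 1)
    (hx : IsPeriodicPt (unicritical n a) h x) (hh : 0 < h) :
    v (∏ j ∈ range h, n * (unicritical n a)^[j] x ^ (n - 1)) ≤ 1 ↔
      v (n ^ n * a ^ (n - 1)) ≤ 1 := by
  set g := unicritical n a
  obtain ⟨j₀, hmax⟩ := hx.exists_forall_apply_iterate_le hh v
  set M := v (g^[j₀] x)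
  have hpow : ∀ U : Γ₀, (v n * U ^ (n - 1)) ^ n = v n ^ n * (U ^ n) ^ (n - 1) := fun U ↦ by
    rw [mul_pow, ← pow_mul, ← pow_mul, mul_comm n]
  have hn0 : n ≠ 0 := by omega
  simp only [map_prod, map_mul, map_pow]
  constructor
  · intro hμ
    by_contra! hw
    have ha : 1 < v a := by
      refine (one_lt_pow_iff (by omega : n - 1 ≠ 0)).1 (hw.trans_le ?_)
      exact mul_le_of_le_one_left' (pow_le_one' hN n)
    obtain ⟨hMa, hconst⟩ := v.map_iterate_unicritical_eq hn ha hmax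
    have hF : 1 < v n * M ^ (n - 1) := by
      rw [← one_lt_pow_iff hn0, hpow, hMa]; exact hw
    rw [prod_congr rfl fun j _ ↦ by rw [hconst j], prod_const, card_range] at hμ
    exact hμ.not_gt (one_lt_pow' hF (by omega))
  · intro hw
    have hy : v (g (g^[j₀] x)) ≤ M := by simpa only [iterate_succ_apply'] using hmax (j₀ + 1)
    have hF : v n * M ^ (n - 1) ≤ 1 := by
      rcases v.le_one_or_pow_le_of_map_unicritical_le hn hy with hM | hM
      · exact mul_le_one' hN (pow_le_one' hM _)
      · rw [← pow_le_one_iff hn0, hpow]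
        exact le_trans (by gcongr) hw
    exact prod_le_one' fun j _ ↦ le_trans (by gcongr; exact hmax j) hF

end Valuation

theorem ValuationSubring.multiplier_unicritical_mem_iff {K : Type*} [Field K]
    (O : ValuationSubring K) {n h : ℕ} {a x : K} (hn : 2 ≤ n)
    (hx : IsPeriodicPt (unicritical n a) h x) (hh : 0 < h) :
    ∏ j ∈ range h, n * (unicritical n a)^[j] x ^ (n - 1) ∈ O ↔ (n : K) ^ n * a ^ (n - 1) ∈ O := by
  simp only [← O.valuation_le_one_iff]
  exact O.valuation.map_multiplier_unicritical_le_one_iff hn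
    (O.valuation_le_one ⟨n, natCast_mem O n⟩) hx hh

namespace Polynomial

variable {K : Type*} [Field K] [IsAlgClosed K]

theorem eq_C_leadingCoeff_mul_X_sub_C_pow {q : K[X]} {γ : K} (hq : ∀ z, q.IsRoot z → z = γ) :
    q = C q.leadingCoeff * (X - C γ) ^ q.natDegree := by
  have hroots : q.roots = Multiset.replicate q.natDegree γ :=
    Multiset.eq_replicate.2 ⟨IsAlgClosed.card_roots_eq_natDegree,
      fun z hz ↦ hq z (isRoot_of_mem_roots hz)⟩
  refine (C_leadingCoeff_mul_prod_multiset_X_sub_C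
    IsAlgClosed.card_roots_eq_natDegree).symm.trans ?_
  rw [hroots, Multiset.map_replicate, Multiset.prod_replicate]

variable [CharZero K]

/-- Integrating `p' = c (X - γ) ^ m` gives `p = b (X - γ) ^ (m + 1) + d`, and `φ x = l (x - γ)`
with `l ^ m = b` conjugates this to `y ↦ y ^ (m + 1) + a`. -/
theorem exists_semiconj_unicritical {p : K[X]} (hcrit : ∃! z, p.derivative.eval z = 0) :
    ∃ (N : ℕ) (a : K) (φ : K → K), 2 ≤ N ∧ Semiconj φ p.eval (unicritical N a) ∧
      ∀ x, p.derivative.eval x = N * φ x ^ (N - 1) := by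
  obtain ⟨γ, hγ, huniq⟩ := hcrit
  set c := p.derivative.leadingCoeff
  set m := p.derivative.natDegree
  have hp' : p.derivative = C c * (X - C γ) ^ m := eq_C_leadingCoeff_mul_X_sub_C_pow huniq
  have hc : c ≠ 0 := by
    intro hc
    have := huniq (γ + 1) (by rw [hp', hc]; simp)
    simp at this
  have hm : m ≠ 0 := by
    intro hm
    rw [hp', hm] at hγ
    simp [hc] at hγ
  set b := c / (m + 1)
  have hb : (m + 1 : K) * b = c := mul_div_cancel₀ c (Nat.cast_add_one_ne_zero m)
  set r := p - C b * (X - C γ) ^ (m + 1)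
  have hr : r.derivative = 0 := by
    rw [derivative_sub, derivative_C_mul, derivative_X_sub_C_pow, hp', Nat.add_sub_cancel,
      ← mul_assoc, ← C_mul, Nat.cast_succ, mul_comm b, hb, sub_self]
  obtain ⟨l, hl⟩ := IsAlgClosed.exists_pow_nat_eq b (Nat.pos_of_ne_zero hm)
  refine ⟨m + 1, l * (r.coeff 0 - γ), fun x ↦ l * (x - γ), by omega, fun x ↦ ?_, fun x ↦ ?_⟩
  · have hpx : p.eval x = b * (x - γ) ^ (m + 1) + r.coeff 0 := by
      rw [← eval_C (a := r.coeff 0) (x := x), ← eq_C_of_derivative_eq_zero hr]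
      simp [r]
    simp only [unicritical, hpx, mul_pow, ← hl]
    ring
  · rw [hp']
    simp [mul_pow, hl, ← hb, mul_assoc]

end Polynomial

theorem mem_intClosure_iff {u x : ℂ} :
    x ∈ intClosure u ↔ ∀ O : ValuationSubring ℂ, u ∈ O → x ∈ O := by
  have hint : x ∈ intClosure u ↔ x ∈ (integralClosure (Subring.closure {u}) ℂ).toSubring :=
    ((Subring.closureEquivAdjoinInt {u}).toRingEquiv.isIntegral_iff rfl x).symm
  rw [hint, ← iInf_valuationSubring_superset, Subring.mem_iInf, Subtype.forall]
  simp only [Set.singleton_subset_iff]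
  exact Iff.rfl

theorem stmt4_general (p : Polynomial ℂ)
    (hcrit : ∃! z₀ : ℂ, (Polynomial.derivative p).eval z₀ = 0)
    (f : ℂ → ℂ) (hf : f = fun z : ℂ => p.eval z)
    (z z' : ℂ) (h h' : ℕ) (hh : 1 ≤ h) (hh' : 1 ≤ h')
    (hz : f^[h] z = z) (hz' : f^[h'] z' = z')
    (μ μ' : ℂ)
    (hμ : μ = ∏ j ∈ Finset.range h, (Polynomial.derivative p).eval (f^[j] z))
    (hμ' : μ' = ∏ j ∈ Finset.range h', (Polynomial.derivative p).eval (f^[j] z')) :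
    intClosure μ = intClosure μ' := by
  obtain ⟨N, a, φ, hN, hφ, hderiv⟩ := exists_semiconj_unicritical hcrit
  have hmem : ∀ {x : ℂ} {k : ℕ}, 1 ≤ k → f^[k] x = x → ∀ O : ValuationSubring ℂ,
      ∏ j ∈ range k, p.derivative.eval (f^[j] x) ∈ O ↔ (N : ℂ) ^ N * a ^ (N - 1) ∈ O := by
    intro x k hk hx O
    subst hf
    simp only [hderiv, (hφ.iterate_right _).eq]
    exact O.multiplier_unicritical_mem_iff hN (IsPeriodicPt.map hx hφ) hk
  ext x
  simp only [mem_intClosure_iff, hμ, hμ', hmem hh hz, hmem hh' hz']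

theorem stmt4 (p : Polynomial ℂ) (n : ℕ) (hn : 2 ≤ n) (hdeg : p.natDegree = n)
    (hcrit : ∃! z₀ : ℂ, (Polynomial.derivative p).eval z₀ = 0)
    (f : ℂ → ℂ) (hf : f = fun z : ℂ => p.eval z)
    (z z' : ℂ) (h h' : ℕ) (hh : 1 ≤ h) (hh' : 1 ≤ h')
    (hz : f^[h] z = z) (hz' : f^[h'] z' = z')
    (μ μ' : ℂ)
    (hμ : μ = ∏ j ∈ Finset.range h, (Polynomial.derivative p).eval (f^[j] z))
    (hμ' : μ' = ∏ j ∈ Finset.range h', (Polynomial.derivative p).eval (f^[j] z')) :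
    intClosure μ = intClosure μ' :=
  stmt4_general p hcrit f hf z z' h h' hh hh' hz hz' μ μ' hμ hμ'
end

section
/- Let n ≥ 2 be an integer, let b be a nonzero algebraic integer, and let w be a periodic point of g_b of period h ≥ 1 whose multiplier μ = ∏_{j=0}^{h-1} (g_b^{∘j}(w))^{n-1} is a primitive m-th root of unity. Set r = h·m and let d be the degree of the minimal polynomial of b over ℤ. Then the constant coefficient of the minimal polynomial of b over ℤ divides (n^r − 1)^d in ℤ; equivalently, Norm(b) divides (n^r − 1)^d. -/
/-!
Points of a periodic orbit of `g_b` are algebraic integers: clearing denominators,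
`n ^ e * g_b^[h] z` is a monic polynomial of degree `n ^ h` in `z` with algebraic-integer
coefficients, so a fixed point of `g_b^[h]` is a root of a monic integral polynomial.
Modulo `b` the orbit relation `n z_{j+1} = z_j ^ n + b` reads `z_j ^ n ≡ n z_{j+1}`; multiplying
over the orbit gives `P ^ n ≡ n ^ h P` for `P = ∏ z_j`, while `P ^ (n - 1) = μ` with `μ ^ m = 1`.
Hence `P ^ m` is a unit and `n ^ r ≡ 1`, i.e. `b ∣ n ^ r - 1` among algebraic integers. Taking
norms from `ℚ(b)`, `Norm(b) * Norm((n ^ r - 1) / b) = (n ^ r - 1) ^ d` with both factors in `ℤ`.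
-/

open Polynomial Finset Function IntermediateField

section Monoid

variable {M : Type*} [CommMonoid M]

theorem pow_eq_one_of_pow_succ_eq_mul {x a : M} {k m : ℕ} (hk : k ≠ 0)
    (hxa : x ^ (k + 1) = a * x) (hx : (x ^ k) ^ m = 1) : a ^ m = 1 := by
  have hunit : IsUnit (x ^ m) :=
    IsUnit.of_pow_eq_one (by rw [← pow_mul, mul_comm, pow_mul, hx]) hk
  refine hunit.mul_eq_right.mp ?_
  calc a ^ m * x ^ m = (x ^ (k + 1)) ^ m := by rw [hxa, mul_pow]
    _ = x ^ m := by rw [pow_succ, mul_pow, hx, one_mul]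

theorem prod_range_pow_eq_pow_mul_prod {u : ℕ → M} {a : M} {n h : ℕ}
    (hu : ∀ j, u j ^ n = a * u (j + 1)) (hper : u h = u 0) :
    (∏ j ∈ range h, u j) ^ n = a ^ h * ∏ j ∈ range h, u j := by
  have hshift : ∏ j ∈ range h, u (j + 1) = ∏ j ∈ range h, u j := by
    cases h with
    | zero => rfl
    | succ h => rw [prod_range_succ, hper, ← prod_range_succ']
  rw [← prod_pow, prod_congr rfl fun j _ ↦ hu j, prod_mul_distrib, prod_const, card_range,
    hshift]

end Monoid

theorem dvd_pow_sub_one_of_periodic {R : Type*} [CommRing R] {n h m : ℕ} (hn : 2 ≤ n)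
    {a b : R} {u : ℕ → R} (hu : ∀ j, a * u (j + 1) = u j ^ n + b) (hper : u h = u 0)
    (hμ : (∏ j ∈ range h, u j ^ (n - 1)) ^ m = 1) :
    b ∣ a ^ (h * m) - 1 := by
  let π := Ideal.Quotient.mk (Ideal.span {b})
  have hπb : π b = 0 := Ideal.Quotient.eq_zero_iff_mem.mpr (Ideal.mem_span_singleton_self b)
  have hu' : ∀ j, π (u j) ^ n = π a * π (u (j + 1)) := fun j ↦ by
    rw [← map_pow, ← map_mul, hu, map_add, hπb, add_zero]
  have hprod := prod_range_pow_eq_pow_mul_prod (u := fun j ↦ π (u j)) hu' (congrArg π hper)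
  have hroot : ((∏ j ∈ range h, π (u j)) ^ (n - 1)) ^ m = 1 := by
    rw [← prod_pow, ← map_one π, ← hμ, map_pow, map_prod]
    simp only [map_pow]
  obtain ⟨k, rfl⟩ : ∃ k, n = k + 1 := ⟨n - 1, by omega⟩
  have := pow_eq_one_of_pow_succ_eq_mul (by omega) hprod hroot
  rw [← pow_mul, ← map_pow] at this
  rw [← Ideal.mem_span_singleton, ← Ideal.Quotient.eq, this, map_one]

section Iterate

variable {R A : Type*} [CommRing R] [Nontrivial R] [CommRing A] [Algebra R A]
  {n : ℕ} {a b : R} {g : A → A}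

theorem exists_monic_aeval_eq_pow_mul_iterate (hn : 0 < n)
    (hg : ∀ z, algebraMap R A a * g z = z ^ n + algebraMap R A b) (z : A) (k : ℕ) :
    ∃ (e : ℕ) (P : R[X]), P.Monic ∧ P.natDegree = n ^ k ∧
      aeval z P = algebraMap R A a ^ e * g^[k] z := by
  induction k with
  | zero => exact ⟨0, X, monic_X, by simp, by simp⟩
  | succ k ih =>
    obtain ⟨e, P, hP, hdeg, heval⟩ := ih
    have hdeg_pow : (P ^ n).natDegree = n ^ (k + 1) := by rw [hP.natDegree_pow, hdeg, pow_succ']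
    have hlt : (C (b * a ^ (n * e))).degree < (P ^ n).degree := by
      rw [degree_eq_natDegree (hP.pow n).ne_zero, hdeg_pow]
      exact degree_C_le.trans_lt (by exact_mod_cast pow_pos hn _)
    refine ⟨n * e + 1, P ^ n + C (b * a ^ (n * e)), (hP.pow n).add_of_left hlt, ?_, ?_⟩
    · rw [natDegree_add_eq_left_of_degree_lt hlt, hdeg_pow]
    · rw [iterate_succ_apply', map_add, map_pow, heval, aeval_C, map_mul, map_pow, pow_succ,
        mul_assoc, hg, pow_mul]
      ring

theorem isIntegral_of_isPeriodicPt (hn : 2 ≤ n)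
    (hg : ∀ z, algebraMap R A a * g z = z ^ n + algebraMap R A b) {h : ℕ} (hh : 1 ≤ h) {z : A}
    (hz : IsPeriodicPt g h z) : IsIntegral R z := by
  obtain ⟨e, P, hP, hdeg, heval⟩ := exists_monic_aeval_eq_pow_mul_iterate (by omega) hg z h
  have hlt : (C (a ^ e) * X).degree < P.degree := by
    rw [degree_eq_natDegree hP.ne_zero, hdeg]
    refine (degree_C_mul_X_le _).trans_lt ?_
    exact_mod_cast Nat.one_lt_pow (by omega) (by omega)
  refine ⟨P - C (a ^ e) * X, hP.sub_of_left hlt, ?_⟩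
  rw [← aeval_def, map_sub, heval, hz.eq]
  simp

end Iterate

theorem coeff_zero_minpoly_dvd_pow {L : Type*} [Field L] [CharZero L] {b c : L} (hb0 : b ≠ 0)
    (hb : IsIntegral ℤ b) (hc : IsIntegral ℤ c) {N : ℤ} (hbc : b * c = N) :
    (minpoly ℤ b).coeff 0 ∣ N ^ (minpoly ℤ b).natDegree := by
  set d := (minpoly ℤ b).natDegree
  have hbℚ : IsIntegral ℚ b := hb.tower_top
  have hminpoly : minpoly ℚ b = (minpoly ℤ b).map (algebraMap ℤ ℚ) :=
    minpoly.isIntegrallyClosed_eq_field_fractions' ℚ hb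
  have hdeg : (minpoly ℚ b).natDegree = d := by rw [hminpoly, (minpoly.monic hb).natDegree_map]
  set x := AdjoinSimple.gen ℚ b
  have hx0 : x ≠ 0 := by simpa [x, ← Subtype.coe_injective.ne_iff] using hb0
  set y : ℚ⟮b⟯ := N / x with hy_def
  have hy : IsIntegral ℤ y := by
    refine (isIntegral_algHom_iff (ℚ⟮b⟯.val.restrictScalars ℤ) Subtype.val_injective).mp ?_
    convert hc
    simp [y, x, ← hbc, hb0]
  obtain ⟨k, hk⟩ := IsIntegrallyClosed.isIntegral_iff.mp (Algebra.isIntegral_norm ℚ hy)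
  have hnorm_x : Algebra.norm ℚ x = (-1) ^ d * ((minpoly ℤ b).coeff 0 : ℚ) := by
    have := Algebra.PowerBasis.norm_gen_eq_coeff_zero_minpoly (adjoin.powerBasis hbℚ)
    rwa [adjoin.powerBasis_dim, hdeg, adjoin.powerBasis_gen, minpoly_gen, hminpoly, coeff_map,
      eq_intCast] at this
  have hnorm_mul : Algebra.norm ℚ x * Algebra.norm ℚ y = (N : ℚ) ^ d := by
    rw [← map_mul, hy_def, mul_div_cancel₀ _ hx0, ← map_intCast (algebraMap ℚ ℚ⟮b⟯),
      Algebra.norm_algebraMap, adjoin.finrank hbℚ, hdeg]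
  rw [hnorm_x, ← hk, eq_intCast] at hnorm_mul
  refine ⟨(-1) ^ d * k, ?_⟩
  exact_mod_cast (by push_cast; linear_combination -hnorm_mul :
    ((N ^ d : ℤ) : ℚ) = (((minpoly ℤ b).coeff 0 * ((-1) ^ d * k) : ℤ) : ℚ))

theorem stmt9_general (n : ℕ) (hn : 2 ≤ n) (b : ℂ) (hb0 : b ≠ 0) (hb : IsIntegral ℤ b)
    (g : ℂ → ℂ) (hg : g = fun z : ℂ => (z ^ n + b) / n)
    (w : ℂ) (h : ℕ) (hh : 1 ≤ h) (hper : g^[h] w = w)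
    (μ : ℂ) (hμ : μ = ∏ j ∈ Finset.range h, (g^[j] w) ^ (n - 1))
    (m : ℕ) (hprim : IsPrimitiveRoot μ m)
    (r : ℕ) (hr : r = h * m)
    (d : ℕ) (hd : d = (minpoly ℤ b).natDegree) :
    (minpoly ℤ b).coeff 0 ∣ ((n : ℤ) ^ r - 1) ^ d := by
  subst hr hd
  let O := integralClosure ℤ ℂ
  have hg' : ∀ z, algebraMap O ℂ n * g z = z ^ n + algebraMap O ℂ ⟨b, hb⟩ := fun z ↦ by
    simp [hg, mul_div_cancel₀, show (n : ℂ) ≠ 0 by norm_cast; omega]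
  have horbit : ∀ j, IsIntegral ℤ (g^[j] w) := fun j ↦
    isIntegral_trans _ (isIntegral_of_isPeriodicPt hn hg' hh (IsPeriodicPt.apply_iterate hper j))
  let u : ℕ → O := fun j ↦ ⟨g^[j] w, horbit j⟩
  obtain ⟨c, hc⟩ : (⟨b, hb⟩ : O) ∣ (n : O) ^ (h * m) - 1 := by
    refine dvd_pow_sub_one_of_periodic hn (u := u) (fun j ↦ Subtype.ext ?_) (Subtype.ext hper)
      (Subtype.ext ?_)
    · simpa [u, iterate_succ_apply'] using hg' (g^[j] w)
    · simpa [u, hμ] using hprim.pow_eq_one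
  exact coeff_zero_minpoly_dvd_pow hb0 hb c.2 (by simpa using congrArg Subtype.val hc.symm)

theorem stmt9 (n : ℕ) (hn : 2 ≤ n) (b : ℂ) (hb0 : b ≠ 0) (hb : IsIntegral ℤ b)
    (g : ℂ → ℂ) (hg : g = fun z : ℂ => (z ^ n + b) / n)
    (w : ℂ) (h : ℕ) (hh : 1 ≤ h) (hper : g^[h] w = w)
    (μ : ℂ) (hμ : μ = ∏ j ∈ Finset.range h, (g^[j] w) ^ (n - 1))
    (m : ℕ) (hm : 1 ≤ m) (hprim : IsPrimitiveRoot μ m)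
    (r : ℕ) (hr : r = h * m)
    (d : ℕ) (hd : d = (minpoly ℤ b).natDegree) :
    (minpoly ℤ b).coeff 0 ∣ ((n : ℤ) ^ r - 1) ^ d :=
  stmt9_general n hn b hb0 hb g hg w h hh hper μ hμ m hprim r hr d hd
end

section
/- Let n ≥ 2 be an integer, let b be an algebraic integer, and let w be a periodic point of g_b of period h ≥ 1 with multiplier μ = ∏_{j=0}^{h-1} (g_b^{∘j}(w))^{n-1}. Then μⁿ − (−b)^{(n-1)h} lies in the ideal n·𝒪, where 𝒪 is the ring of all algebraic integers; that is, (μⁿ − (−b)^{(n-1)h})/n is an algebraic integer. -/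
/-!
Clearing denominators, `n^{M_k} g_b^{∘k}(z)` is a monic polynomial of degree `nᵏ` in `z` with
coefficients in `ℤ[b]`, so a periodic point `z = g_b^{∘h}(z)` is a root of a monic polynomial of
degree `nʰ ≥ 2` with algebraic integer coefficients, hence an algebraic integer. Along the orbit
`w_j = g_b^{∘j}(w)` we have `w_jⁿ + b = n w_{j+1}`, so modulo `n𝒪`,
`μⁿ = ∏ (w_jⁿ)ⁿ⁻¹ ≡ (-b)^{(n-1)h}`.
-/

open Polynomial Finset Function

section IterateNumerator

variable {R : Type*} [CommRing R] (n : ℕ) (N b : R)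

/-- `N ^ M_k`, the denominator of the `k`-th iterate of `z ↦ (zⁿ + b) / N`, where
`M_{k+1} = n M_k + 1`. -/
def iterDenom : ℕ → R
  | 0 => 1
  | k + 1 => N * iterDenom k ^ n

noncomputable def iterNumer : ℕ → R[X]
  | 0 => X
  | k + 1 => iterNumer k ^ n + C (iterDenom n N k ^ n * b)

variable {n}

theorem iterNumer_monic_natDegree [Nontrivial R] (hn : 1 ≤ n) (k : ℕ) :
    (iterNumer n N b k).Monic ∧ (iterNumer n N b k).natDegree = n ^ k := by
  induction k with
  | zero => exact ⟨monic_X, natDegree_X⟩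
  | succ k ih =>
    obtain ⟨hmonic, hdeg⟩ := ih
    have hdeg_pow : (iterNumer n N b k ^ n).natDegree = n ^ (k + 1) := by
      rw [hmonic.natDegree_pow, hdeg, pow_succ']
    have hlt : (C (iterDenom n N k ^ n * b)).degree < (iterNumer n N b k ^ n).degree := by
      refine degree_C_le.trans_lt ?_
      rw [degree_eq_natDegree (hmonic.pow n).ne_zero, hdeg_pow]
      exact_mod_cast Nat.pos_of_ne_zero (pow_ne_zero _ (by omega))
    exact ⟨(hmonic.pow n).add_of_left hlt, by rw [iterNumer, natDegree_add_C, hdeg_pow]⟩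

theorem aeval_iterNumer {K : Type*} [Field K] [Algebra R K] (hN : algebraMap R K N ≠ 0)
    (z : K) (k : ℕ) :
    aeval z (iterNumer n N b k) = algebraMap R K (iterDenom n N k) *
      (fun z => (z ^ n + algebraMap R K b) / algebraMap R K N)^[k] z := by
  induction k with
  | zero => simp [iterNumer, iterDenom]
  | succ k ih =>
    rw [iterNumer, iterDenom, map_add, map_pow, ih, aeval_C, iterate_succ_apply']
    simp only [map_mul, map_pow]
    field_simp
    ring

-- A periodic point `z` of period `h` is a root of `iterNumer h - iterDenom h * X`.
theorem isIntegral_of_isPeriodicPt_of_algebraMap {K : Type*} [Field K] [Algebra R K]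
    [Nontrivial R] (hn : 2 ≤ n) (hN : algebraMap R K N ≠ 0) {h : ℕ} (hh : 1 ≤ h) {z : K}
    (hz : IsPeriodicPt (fun z => (z ^ n + algebraMap R K b) / algebraMap R K N) h z) :
    IsIntegral R z := by
  obtain ⟨hmonic, hdeg⟩ := iterNumer_monic_natDegree N b (by omega : 1 ≤ n) h
  have hlt : (C (iterDenom n N h) * X).degree < (iterNumer n N b h).degree := by
    refine (degree_C_mul_X_le _).trans_lt ?_
    rw [degree_eq_natDegree hmonic.ne_zero, hdeg]
    exact_mod_cast Nat.one_lt_pow (by omega) (by omega)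
  refine ⟨_, hmonic.sub_of_left hlt, ?_⟩
  rw [← aeval_def, map_sub, map_mul, aeval_C, aeval_X, aeval_iterNumer N b hN, hz.eq, sub_self]

end IterateNumerator

theorem isIntegral_of_isPeriodicPt_s11 {R K : Type*} [CommRing R] [Field K] [Algebra R K]
    {n : ℕ} (hn : 2 ≤ n) (hn0 : (n : K) ≠ 0) {b : K} (hb : IsIntegral R b) {h : ℕ}
    (hh : 1 ≤ h) {z : K} (hz : IsPeriodicPt (fun z => (z ^ n + b) / n) h z) : IsIntegral R z := by
  refine isIntegral_trans z (isIntegral_of_isPeriodicPt_of_algebraMap (K := K)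
    (n : integralClosure R K) ⟨b, hb⟩ hn (by rwa [map_natCast]) hh ?_)
  rwa [map_natCast]

theorem dvd_prod_pow_pow_sub {R ι : Type*} [CommRing R] {d c : R} {x : ι → R} {s : Finset ι}
    {n : ℕ} (hx : ∀ j ∈ s, d ∣ x j ^ n - c) (m : ℕ) :
    d ∣ (∏ j ∈ s, x j ^ m) ^ n - c ^ (m * #s) := by
  simp only [← Ideal.mem_span_singleton, ← Ideal.Quotient.eq, map_pow, map_prod] at hx ⊢
  rw [← prod_pow, pow_mul, ← prod_const]
  refine prod_congr rfl fun j hj => ?_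
  rw [← pow_mul, mul_comm, pow_mul, hx j hj]

theorem stmt11 (n : ℕ) (hn : 2 ≤ n) (b : ℂ) (hb : IsIntegral ℤ b)
    (g : ℂ → ℂ) (hg : g = fun z : ℂ => (z ^ n + b) / n)
    (w : ℂ) (h : ℕ) (hh : 1 ≤ h) (hper : g^[h] w = w)
    (μ : ℂ) (hμ : μ = ∏ j ∈ Finset.range h, (g^[j] w) ^ (n - 1)) :
    IsIntegral ℤ ((μ ^ n - (-b) ^ ((n - 1) * h)) / n) := by
  have hn0 : (n : ℂ) ≠ 0 := Nat.cast_ne_zero.2 (by omega)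
  have horbit (j : ℕ) : IsIntegral ℤ (g^[j] w) := by
    subst hg
    exact isIntegral_of_isPeriodicPt_s11 hn hn0 hb hh (IsPeriodicPt.apply_iterate hper j)
  let W (j : ℕ) : integralClosure ℤ ℂ := ⟨g^[j] w, horbit j⟩
  have hstep : ∀ j ∈ range h, (n : integralClosure ℤ ℂ) ∣ W j ^ n - -⟨b, hb⟩ := by
    refine fun j _ => ⟨W (j + 1), Subtype.ext ?_⟩
    simp only [W, iterate_succ_apply', hg]
    push_cast
    field_simp
    ring
  obtain ⟨t, ht⟩ := dvd_prod_pow_pow_sub hstep (n - 1)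
  have hμt : μ ^ n - (-b) ^ ((n - 1) * h) = n * t := by
    simpa [hμ, W] using congrArg Subtype.val ht
  rw [hμt, mul_div_cancel_left₀ _ hn0]
  exact t.2
end

section
/- Let n ≥ 2 be an integer, let c be an algebraic integer, and let z_0, z_1, …, z_{h-1} (indices modulo h) be a periodic orbit of f_c of period h > 1, so that z_{j+1} = z_jⁿ + c for all j and the points z_0, …, z_{h-1} are pairwise distinct. Define φ(x,y) = x^{n-1} + x^{n-2}y + ⋯ + x·y^{n-2} + y^{n-1}. Then each number φ(z_j, z_{j+1}) is a unit in the ring of algebraic integers: both φ(z_j, z_{j+1}) and its inverse are algebraic integers. -/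
/-!
Every point of the orbit is a root of the monic polynomial `f_c^[h](X) - X` over the algebraic
integers, hence an algebraic integer, and so is each `φ(z_j, z_{j+1})`. Writing
`d_j = z_j - z_{j+1}`, the identity `φ(x, y)(x - y) = xⁿ - yⁿ` gives `d_{j+1} = φ(z_j, z_{j+1}) d_j`.
The `d_j` are nonzero and `h`-periodic, so the product of the `φ(z_j, z_{j+1})` over a period is
`1`, exhibiting the inverse of each factor as a product of algebraic integers.
-/

open Polynomial Finset Function

namespace Polynomial

variable {R : Type*} [CommRing R]

theorem Monic.iterate_comp_X [IsDomain R] {p : R[X]} (hp : p.Monic) (hdeg : p.natDegree ≠ 0)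
    (k : ℕ) : (p.comp^[k] X).Monic := by
  induction k with
  | zero => exact monic_X
  | succ k ih =>
    rw [iterate_succ_apply']
    exact hp.comp ih (by simp [hdeg])

theorem Monic.isIntegral_of_isPeriodicPt [IsDomain R] {A : Type*} [CommRing A] [Algebra R A]
    {p : R[X]} (hp : p.Monic) (hdeg : 2 ≤ p.natDegree) {h : ℕ} (hh : 0 < h) {x : A}
    (hx : IsPeriodicPt (fun y => aeval y p) h x) : IsIntegral R x := by
  have hmonic : (p.comp^[h] X - X).Monic := by
    refine (hp.iterate_comp_X (by omega) h).sub_of_left ?_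
    rw [degree_X, degree_eq_natDegree (hp.iterate_comp_X (by omega) h).ne_zero,
      natDegree_iterate_comp, natDegree_X, mul_one]
    exact_mod_cast Nat.one_lt_pow hh.ne' (by omega)
  refine ⟨_, hmonic, ?_⟩
  rw [← aeval_def, map_sub, aeval_X, aeval_def, iterate_comp_eval₂, eval₂_X]
  exact sub_eq_zero.2 hx

end Polynomial

theorem isIntegral_of_isPeriodicPt_pow_add {R A : Type*} [CommRing R] [CommRing A] [IsDomain A]
    [Algebra R A] {n h : ℕ} (hn : 2 ≤ n) (hh : 0 < h) {c x : A} (hc : IsIntegral R c)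
    (hx : IsPeriodicPt (fun w => w ^ n + c) h x) : IsIntegral R x := by
  let p : (integralClosure R A)[X] := X ^ n + C ⟨c, hc⟩
  have hp : (fun y : A => aeval y p) = fun w => w ^ n + c := by
    ext w; simp [p]
  refine isIntegral_trans x ((monic_X_pow_add_C _ (by omega)).isIntegral_of_isPeriodicPt ?_ hh
    (hp ▸ hx))
  rwa [natDegree_X_pow_add_C]

theorem Function.IsPeriodicPt.iterate_succ_ne {α : Type*} {f : α → α} {x : α} {h : ℕ}
    (hx : IsPeriodicPt f h x) (hh : 1 < h) (hinj : Set.InjOn (f^[·] x) (Set.Iio h)) (j : ℕ) :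
    f^[j + 1] x ≠ f^[j] x := by
  intro heq
  rw [← hx.iterate_mod_apply, ← hx.iterate_mod_apply j] at heq
  have hmod : (j + 1) % h = (j + 0) % h :=
    hinj (Nat.mod_lt _ (by omega)) (Nat.mod_lt _ (by omega)) heq
  have := Nat.ModEq.add_left_cancel' j hmod
  rw [Nat.ModEq, Nat.zero_mod, Nat.mod_eq_of_lt hh] at this
  exact one_ne_zero this

theorem prod_range_mul_eq_of_succ_eq_mul {M : Type*} [CommMonoid M] {u Φ : ℕ → M}
    (hu : ∀ j, u (j + 1) = Φ j * u j) (j m : ℕ) : (∏ k ∈ range m, Φ (j + k)) * u j = u (j + m) := by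
  induction m with
  | zero => simp
  | succ m ih => rw [prod_range_succ, mul_right_comm, ih, ← add_assoc, hu, mul_comm]

theorem prod_range_eq_one_of_succ_eq_mul {M₀ : Type*} [CommMonoidWithZero M₀]
    [IsRightCancelMulZero M₀] {u Φ : ℕ → M₀}
    (hu : ∀ j, u (j + 1) = Φ j * u j) {j h : ℕ} (hper : u (j + h) = u j) (hne : u j ≠ 0) :
    ∏ k ∈ range h, Φ (j + k) = 1 :=
  mul_left_injective₀ hne <| by simp only [prod_range_mul_eq_of_succ_eq_mul hu, hper, one_mul]

theorem IsIntegral.inv_of_prod_range_eq_one {R K : Type*} [CommRing R] [Field K] [Algebra R K]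
    {Φ : ℕ → K} (hΦ : ∀ k, IsIntegral R (Φ k)) {j h : ℕ} (hh : 0 < h)
    (hprod : ∏ k ∈ range h, Φ (j + k) = 1) : IsIntegral R (Φ j)⁻¹ := by
  obtain ⟨m, rfl⟩ := Nat.exists_eq_add_of_lt hh
  rw [zero_add, prod_range_succ', add_zero] at hprod
  rw [inv_eq_of_mul_eq_one_left hprod]
  exact IsIntegral.prod _ fun k _ => hΦ _

theorem stmt19 (n : ℕ) (hn : 2 ≤ n) (c : ℂ) (hc : IsIntegral ℤ c)
    (h : ℕ) (hh : 1 < h) (z : ℕ → ℂ)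
    (hstep : ∀ j : ℕ, z (j + 1) = (z j) ^ n + c)
    (hper : z h = z 0)
    (hdist : ∀ i j : ℕ, i < h → j < h → z i = z j → i = j) :
    ∀ j : ℕ,
      IsIntegral ℤ (∑ i ∈ Finset.range n, (z j) ^ i * (z (j + 1)) ^ (n - 1 - i)) ∧
      IsIntegral ℤ (∑ i ∈ Finset.range n, (z j) ^ i * (z (j + 1)) ^ (n - 1 - i))⁻¹ := by
  set f : ℂ → ℂ := fun w => w ^ n + c
  have hz : ∀ j, z j = f^[j] (z 0) := by
    intro j
    induction j with
    | zero => rfl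
    | succ j ih => rw [iterate_succ_apply', ← ih, hstep]
  have hperiodic : IsPeriodicPt f h (z 0) := by
    rw [IsPeriodicPt, IsFixedPt, ← hz, hper]
  have hinj : Set.InjOn (f^[·] (z 0)) (Set.Iio h) := fun i hi j hj hij =>
    hdist i j hi hj (by rwa [hz i, hz j])
  have hint : ∀ j, IsIntegral ℤ (z j) := fun j => by
    rw [hz]
    exact isIntegral_of_isPeriodicPt_pow_add hn (by omega) hc (hperiodic.apply_iterate j)
  set Φ : ℕ → ℂ := fun j => ∑ i ∈ range n, z j ^ i * z (j + 1) ^ (n - 1 - i)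
  have hΦ : ∀ j, IsIntegral ℤ (Φ j) := fun j =>
    IsIntegral.sum _ fun i _ => ((hint j).pow i).mul ((hint (j + 1)).pow _)
  have hzper : ∀ j, z (j + h) = z j := fun j => by
    rw [hz, hz j, iterate_add_apply, hperiodic.eq]
  have hdiff : ∀ j, z (j + 1) - z (j + 1 + 1) = Φ j * (z j - z (j + 1)) := fun j => by
    rw [geom_sum₂_mul, hstep (j + 1), hstep j]
    ring
  have hprod : ∀ j, ∏ k ∈ range h, Φ (j + k) = 1 := fun j =>
    prod_range_eq_one_of_succ_eq_mul (u := fun j => z j - z (j + 1)) hdiff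
      (by rw [add_right_comm, hzper, hzper])
      (sub_ne_zero.2 (by rw [hz j, hz (j + 1)]; exact (hperiodic.iterate_succ_ne hh hinj j).symm))
  exact fun j => ⟨hΦ j, IsIntegral.inv_of_prod_range_eq_one hΦ (by omega) (hprod j)⟩
end
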